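/- If P is a fastest path from s to z in a temporal graph G (i.e., arr(P) − dep(P) is minimum over all time-respecting paths from s to z), then there exists a useful dominating path Q from s to z with the same route as P, dep(Q) = dep(P), and arr(Q) = arr(P); in particular Q is also a fastest path. -/

import Mathlib

/-- A temporal edge with tail, head, departure time and arrival time. -/
structure TEdge (V : Type) where
  tail : V
  head : V
  dep : ℕ
  arr : ℕ

/-- A temporal graph: a set of temporal edges, each with arrival strictly after departure. -/
structure TGraph (V : Type) where
  edges : Set (TEdge V)
  valid : ∀ e ∈ edges, e.dep < e.arr

variable {V : Type}

/-- Time-respecting path: nonempty sequence of edges of `G`, consecutive edges share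
endpoints and each edge departs no earlier than the previous edge arrives. -/
def TRP (G : TGraph V) (p : List (TEdge V)) : Prop :=
  p ≠ [] ∧ (∀ e ∈ p, e ∈ G.edges) ∧
    List.Chain' (fun e f => e.head = f.tail ∧ e.arr ≤ f.dep) p

/-- Departure time of a path (departure of its first edge). -/
def pdep (p : List (TEdge V)) : ℕ := (p.head?.elim 0 TEdge.dep)

/-- Arrival time of a path (arrival of its last edge). -/
def parr (p : List (TEdge V)) : ℕ := (p.getLast?.elim 0 TEdge.arr)

/-- Start vertex of a path. -/
def startV (p : List (TEdge V)) : Option V := p.head?.map TEdge.tail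

/-- End vertex of a path. -/
def endV (p : List (TEdge V)) : Option V := p.getLast?.map TEdge.head

/-- The route (sequence of vertices) a path goes through. -/
def routeOf (p : List (TEdge V)) : List V :=
  p.map TEdge.tail ++ (p.getLast?.elim [] fun e => [e.head])

/-- `ℙ(s,z,r,t)`: time-respecting paths from `s` to `z` through route `r` departing at `t`. -/
def PathsIn (G : TGraph V) (s z : V) (r : List V) (t : ℕ) : Set (List (TEdge V)) :=
  {p | TRP G p ∧ startV p = some s ∧ endV p = some z ∧ routeOf p = r ∧ pdep p = t}

/-- Dominating path in `ℙ(s,z,r,t)`. -/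
def DominatingIn (G : TGraph V) (s z : V) (r : List V) (t : ℕ) (p : List (TEdge V)) : Prop :=
  p ∈ PathsIn G s z r t ∧ ∀ q ∈ PathsIn G s z r t, parr p ≤ parr q

/-- A path is dominating with respect to its own start vertex, route and departure time. -/
def DomSelf (G : TGraph V) (p : List (TEdge V)) : Prop :=
  TRP G p ∧ ∀ q, TRP G q → startV q = startV p → routeOf q = routeOf p →
    pdep q = pdep p → parr p ≤ parr q

/-- Useful dominating path: every (nonempty) prefix is dominating on its own route
and departure time. -/
def UsefulDom (G : TGraph V) (p : List (TEdge V)) : Prop :=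
  ∀ j, 1 ≤ j → j ≤ p.length → DomSelf G (p.take j)

/-- The edge relation of the edge-scan-dependency graph: `v_e → v_f` iff `f` departs
from the head of `e` no earlier than `e` arrives and no parallel edge with the same
endpoints departs no earlier than `arr e` and arrives strictly before `f`. -/
def ESDGAdj (G : TGraph V) (e f : TEdge V) : Prop :=
  e ∈ G.edges ∧ f ∈ G.edges ∧ e.head = f.tail ∧ e.arr ≤ f.dep ∧
    ¬ ∃ g ∈ G.edges, g.tail = f.tail ∧ g.head = f.head ∧ e.arr ≤ g.dep ∧ g.arr < f.arr

/-- A directed path in the ESDG, given as the corresponding sequence of temporal edges. -/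
def ESDGPath (G : TGraph V) (p : List (TEdge V)) : Prop :=
  p ≠ [] ∧ (∀ e ∈ p, e ∈ G.edges) ∧ List.Chain' (ESDGAdj G) p

/-- Earliest arrival path from `s` to `z` with ready time `rt`. -/
def EAPath (G : TGraph V) (s z : V) (rt : ℕ) (p : List (TEdge V)) : Prop :=
  TRP G p ∧ startV p = some s ∧ endV p = some z ∧ rt ≤ pdep p ∧
    ∀ q, TRP G q → startV q = some s → endV q = some z → rt ≤ pdep q → parr p ≤ parr q

/-- Fastest path from `s` to `z`: minimizes journey time `arr - dep`. -/
def FastestPath (G : TGraph V) (s z : V) (p : List (TEdge V)) : Prop :=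
  TRP G p ∧ startV p = some s ∧ endV p = some z ∧
    ∀ q, TRP G q → startV q = some s → endV q = some z →
      parr p - pdep p ≤ parr q - pdep q

/-!
Greedy replacement along the route. Over the first hop take, among the parallel edges with the
same departure time, one that arrives earliest; over every later hop take, among the parallel
edges departing no earlier than the current arrival, one that arrives earliest. Every prefix of
the resulting path arrives no later than any path on the same route and with the same
departure, because an earlier arrival at each vertex leaves a superset of the choices for the
next hop. The new path arrives no later than `P`; as `P` is fastest and departs at the same time,
it arrives exactly when `P` does and is fastest too.
-/

variable {G : TGraph V}

lemma routeOf_singleton (e : TEdge V) : routeOf [e] = [e.tail, e.head] := by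
  simp [routeOf]

lemma routeOf_cons (e : TEdge V) {p : List (TEdge V)} (hp : p ≠ []) :
    routeOf (e :: p) = e.tail :: routeOf p := by
  obtain ⟨f, p', rfl⟩ := List.exists_cons_of_ne_nil hp
  simp [routeOf]

lemma length_routeOf {p : List (TEdge V)} (hp : p ≠ []) :
    (routeOf p).length = p.length + 1 := by
  induction p with
  | nil => exact absurd rfl hp
  | cons e p ih =>
    rcases eq_or_ne p [] with rfl | hp'
    · simp [routeOf_singleton]
    · simp [routeOf_cons e hp', ih hp']

lemma head?_routeOf (p : List (TEdge V)) : (routeOf p).head? = startV p := by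
  cases p <;> simp [routeOf, startV]

lemma getLast?_routeOf (p : List (TEdge V)) : (routeOf p).getLast? = endV p := by
  cases h : p.getLast? <;> simp_all [routeOf, endV, List.getLast?_append]

lemma pdep_cons (e : TEdge V) (p : List (TEdge V)) : pdep (e :: p) = e.dep := by
  simp [pdep]

lemma parr_singleton (e : TEdge V) : parr [e] = e.arr := by
  simp [parr]

lemma parr_cons (e : TEdge V) {p : List (TEdge V)} (hp : p ≠ []) :
    parr (e :: p) = parr p := by
  obtain ⟨f, p', rfl⟩ := List.exists_cons_of_ne_nil hp
  simp [parr]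

lemma pdep_of_prefix {p Q : List (TEdge V)} (h : p <+: Q) (hp : p ≠ []) : pdep p = pdep Q := by
  obtain ⟨e, p', rfl⟩ := List.exists_cons_of_ne_nil hp
  obtain ⟨t, rfl⟩ := h
  simp [pdep]

lemma trp_iff {p : List (TEdge V)} : TRP G p ↔ p ≠ [] ∧ (∀ e ∈ p, e ∈ G.edges) ∧
    p.IsChain (fun e f => e.head = f.tail ∧ e.arr ≤ f.dep) := Iff.rfl

lemma trp_singleton_iff {e : TEdge V} : TRP G [e] ↔ e ∈ G.edges := by
  simp [trp_iff]

lemma trp_cons_iff {e : TEdge V} {p : List (TEdge V)} (hp : p ≠ []) :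
    TRP G (e :: p) ↔
      e ∈ G.edges ∧ TRP G p ∧ startV p = some e.head ∧ e.arr ≤ pdep p := by
  obtain ⟨f, p', rfl⟩ := List.exists_cons_of_ne_nil hp
  simp only [trp_iff, List.isChain_cons_cons, startV, pdep, List.forall_mem_cons]
  simp [eq_comm]
  tauto

lemma TRP.of_prefix {p Q : List (TEdge V)} (hQ : TRP G Q) (h : p <+: Q) (hp : p ≠ []) :
    TRP G p :=
  ⟨hp, fun e he => hQ.2.1 e (h.mem he), hQ.2.2.prefix h⟩

lemma TRP.pdep_le_parr {p : List (TEdge V)} (hp : TRP G p) : pdep p ≤ parr p := by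
  induction p with
  | nil => exact absurd rfl hp.1
  | cons e p ih =>
    have he_valid := G.valid e (hp.2.1 e List.mem_cons_self)
    rcases eq_or_ne p [] with rfl | hp'
    · simpa [pdep_cons, parr_singleton] using he_valid.le
    · obtain ⟨-, hp, -, harr⟩ := (trp_cons_iff hp').1 hp
      rw [pdep_cons, parr_cons e hp']
      exact he_valid.le.trans (harr.trans (ih hp))

def EarliestOnRoute (G : TGraph V) (c : ℕ → Prop) (p : List (TEdge V)) : Prop :=
  ∀ q, TRP G q → routeOf q = routeOf p → c (pdep q) → parr p ≤ parr q

lemma earliestOnRoute_cons {c : ℕ → Prop} {e₀ : TEdge V} {p : List (TEdge V)}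
    (hp : TRP G (e₀ :: p))
    (he₀ : ∀ f ∈ G.edges, f.tail = e₀.tail → f.head = e₀.head → c f.dep → e₀.arr ≤ f.arr)
    (hrest : p ≠ [] → EarliestOnRoute G (e₀.arr ≤ ·) p) :
    EarliestOnRoute G c (e₀ :: p) := by
  intro q hq hroute hc
  obtain ⟨f, q', rfl⟩ := List.exists_cons_of_ne_nil hq.1
  have hlen : q'.length = p.length := by
    have h := length_routeOf hq.1
    rw [hroute, length_routeOf hp.1] at h
    simpa using h.symm
  rw [pdep_cons] at hc
  rcases eq_or_ne p [] with rfl | hp'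
  · obtain rfl : q' = [] := List.length_eq_zero_iff.mp hlen
    simp only [routeOf_singleton, List.cons.injEq] at hroute
    rw [parr_singleton, parr_singleton]
    exact he₀ f (trp_singleton_iff.1 hq) hroute.1 hroute.2.1 hc
  · have hq' : q' ≠ [] := by
      rw [← List.length_pos_iff] at hp' ⊢
      omega
    rw [routeOf_cons f hq', routeOf_cons e₀ hp', List.cons.injEq] at hroute
    obtain ⟨hf, hq'trp, hq'start, hfq'⟩ := (trp_cons_iff hq').1 hq
    obtain ⟨-, -, hpstart, -⟩ := (trp_cons_iff hp').1 hp
    have hhead : f.head = e₀.head :=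
      Option.some.inj (by rw [← hq'start, ← head?_routeOf, hroute.2, head?_routeOf, hpstart])
    rw [parr_cons f hq', parr_cons e₀ hp']
    exact hrest hp' q' hq'trp hroute.2
      ((he₀ f hf hroute.1 hhead hc).trans hfq')

lemma exists_parallel_min_arr (c : ℕ → Prop) {e : TEdge V} (he : e ∈ G.edges) (hc : c e.dep) :
    ∃ e₀ ∈ G.edges, e₀.tail = e.tail ∧ e₀.head = e.head ∧ c e₀.dep ∧ e₀.arr ≤ e.arr ∧
      ∀ f ∈ G.edges, f.tail = e₀.tail → f.head = e₀.head → c f.dep → e₀.arr ≤ f.arr := by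
  set S := {f ∈ G.edges | f.tail = e.tail ∧ f.head = e.head ∧ c f.dep}
  have heS : e ∈ S := ⟨he, rfl, rfl, hc⟩
  obtain ⟨hmem, htail, hhead, hdep⟩ := Function.argminOn_mem TEdge.arr S ⟨e, heS⟩
  refine ⟨_, hmem, htail, hhead, hdep, Function.argminOn_le TEdge.arr S heS, ?_⟩
  intro f hf hft hfh hfc
  exact Function.argminOn_le TEdge.arr S ⟨hf, hft.trans htail, hfh.trans hhead, hfc⟩

lemma exists_earliestOnRoute_prefixes (c : ℕ → Prop) {P : List (TEdge V)} (hP : TRP G P)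
    (hc : c (pdep P)) :
    ∃ Q, TRP G Q ∧ routeOf Q = routeOf P ∧ c (pdep Q) ∧ parr Q ≤ parr P ∧
      ∀ p, p <+: Q → p ≠ [] → EarliestOnRoute G c p := by
  induction P generalizing c with
  | nil => exact absurd rfl hP.1
  | cons e P' ih =>
    rw [pdep_cons] at hc
    obtain ⟨e₀, he₀, htail, hhead, hc₀, he₀e, hmin⟩ :=
      exists_parallel_min_arr c (hP.2.1 e List.mem_cons_self) hc
    rcases eq_or_ne P' [] with rfl | hP'
    · refine ⟨[e₀], trp_singleton_iff.2 he₀, by simp [routeOf_singleton, htail, hhead],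
        by rwa [pdep_cons], by simpa [parr_singleton] using he₀e, ?_⟩
      intro p hp hpne
      obtain rfl : p = [e₀] := hp.eq_of_length_le (List.length_pos_iff.2 hpne)
      exact earliestOnRoute_cons (trp_singleton_iff.2 he₀) hmin (absurd rfl)
    · obtain ⟨-, hP'trp, hP'start, hP'dep⟩ := (trp_cons_iff hP').1 hP
      obtain ⟨Q', hQ', hroute, hQ'dep, hQ'arr, hpre⟩ :=
        ih (e₀.arr ≤ ·) hP'trp (he₀e.trans hP'dep)
      have hQ'ne : Q' ≠ [] := hQ'.1
      have hQ'start : startV Q' = some e₀.head := by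
        rw [← head?_routeOf, hroute, head?_routeOf, hP'start, hhead]
      have hQ : TRP G (e₀ :: Q') := (trp_cons_iff hQ'ne).2 ⟨he₀, hQ', hQ'start, hQ'dep⟩
      refine ⟨e₀ :: Q', hQ, by rw [routeOf_cons _ hQ'ne, routeOf_cons _ hP', hroute, htail],
        by rwa [pdep_cons], by rwa [parr_cons _ hQ'ne, parr_cons _ hP'], ?_⟩
      intro p hp hpne
      obtain ⟨t, rfl, ht⟩ := (List.prefix_cons_iff.1 hp).resolve_left hpne
      exact earliestOnRoute_cons (hQ.of_prefix hp hpne) hmin (hpre t ht)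

lemma usefulDom_of_earliestOnRoute_prefixes {Q : List (TEdge V)} (hQ : TRP G Q)
    (hpre : ∀ p, p <+: Q → p ≠ [] → EarliestOnRoute G (· = pdep Q) p) :
    UsefulDom G Q := by
  intro j hj _
  have htake : Q.take j <+: Q := List.take_prefix j Q
  have hne : Q.take j ≠ [] := by simp [List.take_eq_nil_iff, hQ.1]; omega
  refine ⟨hQ.of_prefix htake hne, fun q hq _ hroute hdep => ?_⟩
  exact hpre _ htake hne q hq hroute (hdep.trans (pdep_of_prefix htake hne))

theorem stmt3 (G : TGraph V) (s z : V) (P : List (TEdge V))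
    (hP : FastestPath G s z P) :
    ∃ Q, TRP G Q ∧ startV Q = some s ∧ endV Q = some z ∧
      routeOf Q = routeOf P ∧ pdep Q = pdep P ∧ parr Q = parr P ∧
      UsefulDom G Q ∧ FastestPath G s z Q := by
  obtain ⟨hPtrp, hs, hz, hfast⟩ := hP
  obtain ⟨Q, hQ, hroute, hdep, hQarr, hpre⟩ :=
    exists_earliestOnRoute_prefixes (· = pdep P) hPtrp rfl
  have hQs : startV Q = some s := by rw [← head?_routeOf, hroute, head?_routeOf, hs]
  have hQz : endV Q = some z := by rw [← getLast?_routeOf, hroute, getLast?_routeOf, hz]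
  have harr : parr Q = parr P := by
    have hP_faster := hfast Q hQ hQs hQz
    have hQ_dep_le_arr := hQ.pdep_le_parr
    omega
  refine ⟨Q, hQ, hQs, hQz, hroute, hdep, harr,
    usefulDom_of_earliestOnRoute_prefixes hQ (hdep ▸ hpre), hQ, hQs, hQz, ?_⟩
  intro q hq hqs hqz
  rw [harr, hdep]
  exact hfast q hq hqs hqz
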